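/- For every n, there is a graph G with chromatic number at least n and clique number at most 3 such that every induced subgraph H of G with clique number at most 2 has chromatic number at most 4. -/
import Mathlib


/-- Vertex set of the digraph `D (n+1)` from the paper (`Vtx n` = vertices of `D_{n+1}`). -/
def Vtx : ℕ → Type
  | 0 => Unit
  | (n+1) => (Fin (n+1) × Vtx n) ⊕ ((i : Fin (n+1)) → Vtx n)

/-- Edge relation of `D_{n+1}`. -/
def DEdge : (n : ℕ) → Vtx n → Vtx n → Prop
  | 0, _, _ => False
  | (n+1), Sum.inl (i, x), Sum.inl (j, y) => i = j ∧ DEdge n x y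
  | (n+1), Sum.inl (i, x), Sum.inr T => T i = x
  | (_+1), Sum.inr _, _ => False

/-- There is a directed walk of length `k` from `u` to `v`. -/
def WalkLen {V : Type*} (E : V → V → Prop) (u v : V) (k : ℕ) : Prop :=
  ∃ f : Fin (k+1) → V, f 0 = u ∧ f (Fin.last k) = v ∧
    ∀ i : Fin k, E (f i.castSucc) (f i.succ)

/-- `l` is a directed path (as a list of distinct vertices) from `u` to `v`. -/
def IsDPath {V : Type*} (E : V → V → Prop) (u v : V) (l : List V) : Prop :=
  l.Chain' E ∧ l.Nodup ∧ l.head? = some u ∧ l.getLast? = some v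

/-- Positive edges of `D'`. -/
def PosE {V : Type*} (E : V → V → Prop) (u v : V) : Prop :=
  ∃ k, k % 3 = 1 ∧ WalkLen E u v k

/-- Negative edges of `D'`. -/
def NegE {V : Type*} (E : V → V → Prop) (u v : V) : Prop :=
  ∃ k, k % 3 = 2 ∧ WalkLen E v u k

/-- Edge relation of `D_{n+1}'`. -/
def DEdge' (n : ℕ) (u v : Vtx n) : Prop :=
  PosE (DEdge n) u v ∨ NegE (DEdge n) u v

/-- Underlying undirected graph of a digraph. -/
def underSG {V : Type*} (E : V → V → Prop) : SimpleGraph V :=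
  SimpleGraph.fromRel E

/-- `G_{n+1}`, the underlying undirected graph of `D_{n+1}'`. -/
def Gn (n : ℕ) : SimpleGraph (Vtx n) := underSG (DEdge' n)

/-- A digraph is acyclic iff no vertex lies on a directed cycle. -/
def DAcyclic {V : Type*} (E : V → V → Prop) : Prop :=
  ∀ v : V, ¬ Relation.TransGen E v v

/-- `k`-dicolorability. -/
def Dicolorable {V : Type*} (E : V → V → Prop) (k : ℕ) : Prop :=
  ∃ f : V → Fin k, ∀ c : Fin k,
    DAcyclic (fun a b => E a b ∧ f a = c ∧ f b = c)

/-- `D` has an induced directed cycle of odd length at least 5. -/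
def HasInducedOddCycle {V : Type*} (E : V → V → Prop) : Prop :=
  ∃ m : ℕ, 5 ≤ m ∧ Odd m ∧ ∃ f : ZMod m → V, Function.Injective f ∧
    (∀ i, E (f i) (f (i+1))) ∧ (∀ i j, E (f i) (f j) → j = i + 1)

section Aux

variable {V : Type*} {E : V → V → Prop} {u v w : V} {k l : ℕ}


variable {V : Type*} {E : V → V → Prop} {u v w : V} {k l : ℕ}

lemma walkLen_zero : WalkLen E u v 0 ↔ u = v := by
  constructor
  · rintro ⟨f, h0, hl, _⟩; rw [← h0, ← hl]; rfl
  · rintro rfl; exact ⟨fun _ => u, rfl, rfl, fun i => i.elim0⟩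

lemma walkLen_refl : WalkLen E u u 0 := walkLen_zero.mpr rfl

lemma walkLen_single (h : E u v) : WalkLen E u v 1 := by
  refine ⟨![u, v], rfl, rfl, fun i => ?_⟩
  fin_cases i; exact h

lemma walkLen_cons (h : E u w) (hw : WalkLen E w v k) : WalkLen E u v (k+1) := by
  obtain ⟨f, h0, hl, hf⟩ := hw
  refine ⟨Fin.cons u f, Fin.cons_zero _ _, ?_, fun i => ?_⟩
  · rw [← Fin.succ_last, Fin.cons_succ]; exact hl
  · induction i using Fin.cases with
    | zero =>
      simpa [Fin.succ_zero_eq_one, h0] using h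
    | succ j =>
      have e1 : (j.succ).castSucc = (j.castSucc).succ := (Fin.succ_castSucc j).symm
      rw [e1, Fin.cons_succ, Fin.cons_succ]
      exact hf j

lemma walkLen_uncons (h : WalkLen E u v (k+1)) : ∃ w, E u w ∧ WalkLen E w v k := by
  obtain ⟨f, h0, hl, hf⟩ := h
  refine ⟨f 1, ?_, fun i => f i.succ, ?_, ?_, fun i => ?_⟩
  · have := hf 0
    simpa [h0, Fin.castSucc_zero, Fin.succ_zero_eq_one] using this
  · simp [Fin.succ_zero_eq_one]
  · show f (Fin.last k).succ = v
    rw [Fin.succ_last]; exact hl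
  · have e1 : (i.succ).castSucc = (i.castSucc).succ := (Fin.succ_castSucc i).symm
    have := hf i.succ
    rwa [e1] at this

lemma walkLen_append (h1 : WalkLen E u v k) (h2 : WalkLen E v w l) :
    WalkLen E u w (k + l) := by
  induction k generalizing u with
  | zero => rw [walkLen_zero] at h1; subst h1; simpa using h2
  | succ m ih =>
    obtain ⟨x, hx, hw⟩ := walkLen_uncons h1
    have : WalkLen E x w (m + l) := ih hw
    have := walkLen_cons hx this
    have e : m + l + 1 = m + 1 + l := by omega
    rwa [e] at this

lemma transGen_walk (h : Relation.TransGen E u v) : ∃ k, WalkLen E u v (k+1) := by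
  induction h with
  | single hb => exact ⟨0, walkLen_single hb⟩
  | tail _ hbc ih =>
    obtain ⟨k, hk⟩ := ih
    exact ⟨k+1, walkLen_append hk (walkLen_single hbc)⟩

end Aux

section Struct

lemma dEdge_inr {n : ℕ} {T : (i : Fin (n+1)) → Vtx n} {y : Vtx (n+1)} :
    ¬ DEdge (n+1) (Sum.inr T) y := by cases y <;> exact fun h => h

lemma dEdge_inl_inl {n : ℕ} {i j : Fin (n+1)} {x y : Vtx n} :
    DEdge (n+1) (Sum.inl (i,x)) (Sum.inl (j,y)) ↔ i = j ∧ DEdge n x y := Iff.rfl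

lemma dEdge_inl_inr {n : ℕ} {i : Fin (n+1)} {x : Vtx n} {T : (i : Fin (n+1)) → Vtx n} :
    DEdge (n+1) (Sum.inl (i,x)) (Sum.inr T) ↔ T i = x := Iff.rfl

lemma walk_from_inr {n : ℕ} {T} {y : Vtx (n+1)} {k : ℕ}
    (h : WalkLen (DEdge (n+1)) (Sum.inr T) y k) : k = 0 ∧ y = Sum.inr T := by
  cases k with
  | zero => exact ⟨rfl, (walkLen_zero.mp h).symm⟩
  | succ m => obtain ⟨w, hw, -⟩ := walkLen_uncons h; exact absurd hw dEdge_inr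

lemma walk_inl_inl {n : ℕ} {i j : Fin (n+1)} {x y : Vtx n} {k : ℕ}
    (h : WalkLen (DEdge (n+1)) (Sum.inl (i,x)) (Sum.inl (j,y)) k) :
    i = j ∧ WalkLen (DEdge n) x y k := by
  induction k generalizing x with
  | zero =>
    have h' := walkLen_zero.mp h
    injection h' with h''
    injection h'' with h1 h2
    exact ⟨h1, walkLen_zero.mpr h2⟩
  | succ m ih =>
    obtain ⟨w, hw, hwalk⟩ := walkLen_uncons h
    cases w with
    | inl p =>
      obtain ⟨i', x'⟩ := p
      obtain ⟨rfl, hxe⟩ := dEdge_inl_inl.mp hw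
      obtain ⟨hij, hww⟩ := ih hwalk
      exact ⟨hij, walkLen_cons hxe hww⟩
    | inr T =>
      obtain ⟨-, hy⟩ := walk_from_inr hwalk
      exact absurd hy (by simp)

lemma walk_inl_inr {n : ℕ} {i : Fin (n+1)} {x : Vtx n} {T} {k : ℕ}
    (h : WalkLen (DEdge (n+1)) (Sum.inl (i,x)) (Sum.inr T) k) :
    ∃ m, k = m + 1 ∧ WalkLen (DEdge n) x (T i) m := by
  induction k generalizing x with
  | zero => exact absurd (walkLen_zero.mp h) (by simp)
  | succ m ih =>
    obtain ⟨w, hw, hwalk⟩ := walkLen_uncons h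
    cases w with
    | inl p =>
      obtain ⟨i', x'⟩ := p
      obtain ⟨rfl, hxe⟩ := dEdge_inl_inl.mp hw
      obtain ⟨m', hm', hww⟩ := ih hwalk
      exact ⟨m' + 1, by omega, walkLen_cons hxe hww⟩
    | inr T' =>
      obtain ⟨hk0, hy⟩ := walk_from_inr hwalk
      have hTT : T = T' := by injection hy
      subst hTT
      have hx : T i = x := dEdge_inl_inr.mp hw
      exact ⟨0, by omega, hx ▸ walkLen_refl⟩

lemma uniqueLen : ∀ (n : ℕ) {u v : Vtx n} {k l : ℕ},
    WalkLen (DEdge n) u v k → WalkLen (DEdge n) u v l → k = l := by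
  intro n
  induction n with
  | zero =>
    have aux : ∀ {u v : Vtx 0} {k}, WalkLen (DEdge 0) u v k → k = 0 := by
      intro u v k h
      cases k with
      | zero => rfl
      | succ m => obtain ⟨w, hw, -⟩ := walkLen_uncons h; exact absurd hw (fun h => h)
    intro u v k l h1 h2; rw [aux h1, aux h2]
  | succ n ih =>
    intro u v k l h1 h2
    cases u with
    | inr T =>
      rw [(walk_from_inr h1).1, (walk_from_inr h2).1]
    | inl p =>
      obtain ⟨i, x⟩ := p
      cases v with
      | inl q =>
        obtain ⟨j, y⟩ := q
        exact ih (walk_inl_inl h1).2 (walk_inl_inl h2).2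
      | inr T =>
        obtain ⟨m1, rfl, hw1⟩ := walk_inl_inr h1
        obtain ⟨m2, rfl, hw2⟩ := walk_inl_inr h2
        rw [ih hw1 hw2]

lemma colorBound : ∀ (n : ℕ) {α : Type} [DecidableEq α] (f : Vtx n → α)
    (_ : ∀ u v, DEdge n u v → f u ≠ f v) (s : Finset α)
    (_ : ∀ v, f v ∈ s), n + 1 ≤ s.card := by
  intro n
  induction n with
  | zero =>
    intro α _ f _ s hs
    have : s.Nonempty := ⟨f (), hs ()⟩
    simpa [Nat.succ_le_iff, Finset.card_pos] using this
  | succ n ih =>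
    intro α _ f hf s hs
    by_contra hlt
    push_neg at hlt
    -- each copy is properly colored
    have hcopy : ∀ i : Fin (n+1), ∀ u v, DEdge n u v →
        f (Sum.inl (i, u)) ≠ f (Sum.inl (i, v)) := by
      intro i u v huv
      exact hf _ _ (show DEdge (n+1) (Sum.inl (i,u)) (Sum.inl (i,v)) from ⟨rfl, huv⟩)
    have hcard : s.card = n + 1 := by
      have := ih (fun x => f (Sum.inl (⟨0, Nat.succ_pos n⟩, x))) (hcopy _) s (fun v => hs _)
      omega
    -- surjectivity of each copy onto s
    have hsurj : ∀ (i : Fin (n+1)) (c : α), c ∈ s → ∃ x : Vtx n, f (Sum.inl (i, x)) = c := by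
      intro i c hc
      by_contra hno
      push_neg at hno
      have : n + 1 ≤ (s.erase c).card :=
        ih (fun x => f (Sum.inl (i, x))) (hcopy i) (s.erase c)
          (fun v => Finset.mem_erase.mpr ⟨hno v, hs _⟩)
      have := Finset.card_erase_of_mem hc
      omega
    -- enumerate the colors
    let e := s.equivFin
    let g : Fin (n+1) → α := fun i => (e.symm (Fin.cast hcard.symm i) : α)
    have hg : ∀ i, g i ∈ s := fun i => (e.symm _).2
    choose T hT using fun i : Fin (n+1) => hsurj i (g i) (hg i)
    -- the transversal vertex
    have hmem := hs (Sum.inr T : Vtx (n+1))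
    obtain ⟨j, hj⟩ : ∃ j : Fin (n+1), g j = f (Sum.inr T) := by
      refine ⟨Fin.cast hcard (e ⟨f (Sum.inr T), hmem⟩), ?_⟩
      simp [g]
    have hedge : DEdge (n+1) (Sum.inl (j, T j)) (Sum.inr T) := rfl
    exact hf _ _ hedge (by rw [hT j, hj])


section CliqueSec

variable {n : ℕ}

lemma walk_self {u : Vtx n} {k : ℕ} (h : WalkLen (DEdge n) u u k) : k = 0 :=
  uniqueLen n h walkLen_refl

def Reach (n : ℕ) (u v : Vtx n) : Prop := ∃ k, WalkLen (DEdge n) u v k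

def Link (n : ℕ) (u v : Vtx n) : Prop :=
  ∃ k, k % 3 ≠ 0 ∧ (WalkLen (DEdge n) u v k ∨ WalkLen (DEdge n) v u k)

lemma link_symm {u v : Vtx n} (h : Link n u v) : Link n v u := by
  obtain ⟨k, hk, h | h⟩ := h
  exacts [⟨k, hk, Or.inr h⟩, ⟨k, hk, Or.inl h⟩]

lemma link_comp {u v : Vtx n} (h : Link n u v) : Reach n u v ∨ Reach n v u := by
  obtain ⟨k, -, h | h⟩ := h
  exacts [Or.inl ⟨k, h⟩, Or.inr ⟨k, h⟩]

lemma reach_trans {u v w : Vtx n} (h1 : Reach n u v) (h2 : Reach n v w) : Reach n u w := by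
  obtain ⟨k, h1⟩ := h1; obtain ⟨l, h2⟩ := h2
  exact ⟨k + l, walkLen_append h1 h2⟩

lemma link_dir {u v : Vtx n} (hl : Link n u v) (hr : Reach n u v) :
    ∃ k, WalkLen (DEdge n) u v k ∧ k % 3 ≠ 0 := by
  obtain ⟨k, hk, h | h⟩ := hl
  · exact ⟨k, h, hk⟩
  · obtain ⟨l, hlw⟩ := hr
    have := walk_self (walkLen_append h hlw)
    omega

lemma adj_link {u v : Vtx n} (h : (Gn n).Adj u v) : Link n u v := by
  have h' : u ≠ v ∧ (DEdge' n u v ∨ DEdge' n v u) := by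
    simpa [Gn, underSG, SimpleGraph.fromRel_adj] using h
  rcases h'.2 with (⟨k, hk, hw⟩ | ⟨k, hk, hw⟩) | (⟨k, hk, hw⟩ | ⟨k, hk, hw⟩)
  · exact ⟨k, by omega, Or.inl hw⟩
  · exact ⟨k, by omega, Or.inr hw⟩
  · exact ⟨k, by omega, Or.inr hw⟩
  · exact ⟨k, by omega, Or.inl hw⟩

lemma chainContra {a b c d : Vtx n}
    (hab : Reach n a b) (hbc : Reach n b c) (hcd : Reach n c d)
    (lab : Link n a b) (lbc : Link n b c) (lcd : Link n c d)
    (lac : Link n a c) (lbd : Link n b d) (lad : Link n a d) : False := by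
  obtain ⟨k1, w1, h1⟩ := link_dir lab hab
  obtain ⟨k2, w2, h2⟩ := link_dir lbc hbc
  obtain ⟨k3, w3, h3⟩ := link_dir lcd hcd
  obtain ⟨k4, w4, h4⟩ := link_dir lac (reach_trans hab hbc)
  obtain ⟨k5, w5, h5⟩ := link_dir lbd (reach_trans hbc hcd)
  obtain ⟨k6, w6, h6⟩ := link_dir lad (reach_trans hab (reach_trans hbc hcd))
  have e4 : k4 = k1 + k2 := uniqueLen n w4 (walkLen_append w1 w2)
  have e5 : k5 = k2 + k3 := uniqueLen n w5 (walkLen_append w2 w3)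
  have e6 : k6 = k1 + (k2 + k3) := uniqueLen n w6 (walkLen_append w1 (walkLen_append w2 w3))
  omega

lemma no4clique (s : Finset (Vtx n)) : ¬ (Gn n).IsNClique 4 s := by
  classical
  rintro ⟨hclique, hcard⟩
  obtain ⟨a, t1, ha1, rfl, hc1⟩ := Finset.card_eq_succ.mp hcard
  obtain ⟨b, t2, hb2, rfl, hc2⟩ := Finset.card_eq_succ.mp hc1
  obtain ⟨c, t3, hc3, rfl, hc3'⟩ := Finset.card_eq_succ.mp hc2
  obtain ⟨d, rfl⟩ := Finset.card_eq_one.mp hc3'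
  have hma : (a : Vtx n) ∈ (insert a (insert b (insert c ({d} : Finset (Vtx n))))) := by simp
  have hmb : (b : Vtx n) ∈ (insert a (insert b (insert c ({d} : Finset (Vtx n))))) := by simp
  have hmc : (c : Vtx n) ∈ (insert a (insert b (insert c ({d} : Finset (Vtx n))))) := by simp
  have hmd : (d : Vtx n) ∈ (insert a (insert b (insert c ({d} : Finset (Vtx n))))) := by simp
  have hne_ab : a ≠ b := by simp at ha1; tauto
  have hne_ac : a ≠ c := by simp at ha1; tauto
  have hne_ad : a ≠ d := by simp at ha1; tauto
  have hne_bc : b ≠ c := by simp at hb2; tauto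
  have hne_bd : b ≠ d := by simp at hb2; tauto
  have hne_cd : c ≠ d := by simp at hc3; tauto
  have Lab : Link n a b := adj_link (hclique hma hmb hne_ab)
  have Lac : Link n a c := adj_link (hclique hma hmc hne_ac)
  have Lad : Link n a d := adj_link (hclique hma hmd hne_ad)
  have Lbc : Link n b c := adj_link (hclique hmb hmc hne_bc)
  have Lbd : Link n b d := adj_link (hclique hmb hmd hne_bd)
  have Lcd : Link n c d := adj_link (hclique hmc hmd hne_cd)
  have Lba := link_symm Lab; have Lca := link_symm Lac; have Lda := link_symm Lad
  have Lcb := link_symm Lbc; have Ldb := link_symm Lbd; have Ldc := link_symm Lcd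
  -- sort a,b,c,d into a Reach-chain and apply chainContra
  rcases link_comp Lab with h1 | h1
  · -- chain a,b
    rcases link_comp Lca with h2 | h2
    · -- chain c,a,b
      rcases link_comp Ldc with h4 | h4
      · exact chainContra h4 h2 h1 Ldc Lca Lab Lda Lcb Ldb
      · rcases link_comp Lda with h5 | h5
        · exact chainContra h4 h5 h1 Lcd Lda Lab Lca Ldb Lcb
        · rcases link_comp Ldb with h6 | h6
          · exact chainContra h2 h5 h6 Lca Lad Ldb Lcd Lab Lcb
          · exact chainContra h2 h1 h6 Lca Lab Lbd Lcb Lad Lcd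
    · rcases link_comp Lcb with h3 | h3
      · -- chain a,c,b
        rcases link_comp Lda with h4 | h4
        · exact chainContra h4 h2 h3 Lda Lac Lcb Ldc Lab Ldb
        · rcases link_comp Ldc with h5 | h5
          · exact chainContra h4 h5 h3 Lad Ldc Lcb Lac Ldb Lab
          · rcases link_comp Ldb with h6 | h6
            · exact chainContra h2 h5 h6 Lac Lcd Ldb Lad Lcb Lab
            · exact chainContra h2 h3 h6 Lac Lcb Lbd Lab Lcd Lad
      · -- chain a,b,c
        rcases link_comp Lda with h4 | h4
        · exact chainContra h4 h1 h3 Lda Lab Lbc Ldb Lac Ldc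
        · rcases link_comp Ldb with h5 | h5
          · exact chainContra h4 h5 h3 Lad Ldb Lbc Lab Ldc Lac
          · rcases link_comp Ldc with h6 | h6
            · exact chainContra h1 h5 h6 Lab Lbd Ldc Lad Lbc Lac
            · exact chainContra h1 h3 h6 Lab Lbc Lcd Lac Lbd Lad
  · -- chain b,a
    rcases link_comp Lcb with h2 | h2
    · -- chain c,b,a
      rcases link_comp Ldc with h4 | h4
      · exact chainContra h4 h2 h1 Ldc Lcb Lba Ldb Lca Lda
      · rcases link_comp Ldb with h5 | h5
        · exact chainContra h4 h5 h1 Lcd Ldb Lba Lcb Lda Lca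
        · rcases link_comp Lda with h6 | h6
          · exact chainContra h2 h5 h6 Lcb Lbd Lda Lcd Lba Lca
          · exact chainContra h2 h1 h6 Lcb Lba Lad Lca Lbd Lcd
    · rcases link_comp Lca with h3 | h3
      · -- chain b,c,a
        rcases link_comp Ldb with h4 | h4
        · exact chainContra h4 h2 h3 Ldb Lbc Lca Ldc Lba Lda
        · rcases link_comp Ldc with h5 | h5
          · exact chainContra h4 h5 h3 Lbd Ldc Lca Lbc Lda Lba
          · rcases link_comp Lda with h6 | h6
            · exact chainContra h2 h5 h6 Lbc Lcd Lda Lbd Lca Lba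
            · exact chainContra h2 h3 h6 Lbc Lca Lad Lba Lcd Lbd
      · -- chain b,a,c
        rcases link_comp Ldb with h4 | h4
        · exact chainContra h4 h1 h3 Ldb Lba Lac Lda Lbc Ldc
        · rcases link_comp Lda with h5 | h5
          · exact chainContra h4 h5 h3 Lbd Lda Lac Lba Ldc Lbc
          · rcases link_comp Ldc with h6 | h6
            · exact chainContra h1 h5 h6 Lba Lad Ldc Lbd Lac Lbc
            · exact chainContra h1 h3 h6 Lba Lac Lcd Lbc Lad Lbd



lemma gn_adj {u v : Vtx n} : (Gn n).Adj u v ↔ u ≠ v ∧ (DEdge' n u v ∨ DEdge' n v u) := by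
  simp [Gn, underSG, SimpleGraph.fromRel_adj]

lemma triangleFree_colorable (S : Set (Vtx n))
    (h3 : ∀ s : Finset S, ¬ ((Gn n).induce S).IsNClique 3 s) :
    ((Gn n).induce S).Colorable 4 := by
  classical
  set A : S → Prop := fun v => ∃ x : S, ∃ k, k % 3 = 1 ∧ WalkLen (DEdge n) x.1 v.1 k with hA
  set B : S → Prop := fun v => ∃ x : S, ∃ k, k % 3 = 2 ∧ WalkLen (DEdge n) x.1 v.1 k with hB
  have hind : ∀ {a b : S}, ((Gn n).induce S).Adj a b ↔ (Gn n).Adj a.1 b.1 := by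
    intro a b; rfl
  have key : ∀ (u v : S) (k : ℕ), k % 3 ≠ 0 → WalkLen (DEdge n) u.1 v.1 k →
      (A u, B u) ≠ (A v, B v) := by
    intro u v k hk wuv
    have huv1 : u.1 ≠ v.1 := by
      intro he; rw [he] at wuv; exact hk (by rw [walk_self wuv])
    have hadj_uv : (Gn n).Adj u.1 v.1 := by
      rw [gn_adj]
      refine ⟨huv1, ?_⟩
      rcases (show k % 3 = 0 ∨ k % 3 = 1 ∨ k % 3 = 2 by omega) with h0 | h1 | h2
      · exact absurd h0 hk
      · exact Or.inl (Or.inl ⟨k, h1, wuv⟩)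
      · exact Or.inr (Or.inr ⟨k, h2, wuv⟩)
    intro hPair
    have hAeq : A u = A v := congrArg Prod.fst hPair
    have hBeq : B u = B v := congrArg Prod.snd hPair
    rcases (show k % 3 = 0 ∨ k % 3 = 1 ∨ k % 3 = 2 by omega) with h0 | h1 | h2
    · exact hk h0
    · -- k ≡ 1 : A v holds, so A u holds, giving a triangle
      have hAv : A v := ⟨u, k, h1, wuv⟩
      have hAu : A u := hAeq ▸ hAv
      obtain ⟨x, l, hl, wxu⟩ := hAu
      have hxu : x.1 ≠ u.1 := by
        intro he; rw [he] at wxu; rw [walk_self wxu] at hl; omega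
      have hxv : x.1 ≠ v.1 := by
        intro he
        have : WalkLen (DEdge n) u.1 u.1 (k + l) := walkLen_append wuv (he ▸ wxu)
        have := walk_self this; omega
      have adj_xu : (Gn n).Adj x.1 u.1 := by
        rw [gn_adj]; exact ⟨hxu, Or.inl (Or.inl ⟨l, hl, wxu⟩)⟩
      have adj_xv : (Gn n).Adj x.1 v.1 := by
        rw [gn_adj]
        refine ⟨hxv, Or.inr (Or.inr ⟨l + k, by omega, walkLen_append wxu wuv⟩)⟩
      refine h3 {x, u, v} ?_
      rw [SimpleGraph.is3Clique_triple_iff]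
      refine ⟨hind.mpr adj_xu, hind.mpr adj_xv, hind.mpr hadj_uv⟩
    · -- k ≡ 2 : B v holds, so B u holds, giving a triangle
      have hBv : B v := ⟨u, k, h2, wuv⟩
      have hBu : B u := hBeq ▸ hBv
      obtain ⟨x, l, hl, wxu⟩ := hBu
      have hxu : x.1 ≠ u.1 := by
        intro he; rw [he] at wxu; rw [walk_self wxu] at hl; omega
      have hxv : x.1 ≠ v.1 := by
        intro he
        have : WalkLen (DEdge n) u.1 u.1 (k + l) := walkLen_append wuv (he ▸ wxu)
        have := walk_self this; omega
      have adj_xu : (Gn n).Adj x.1 u.1 := by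
        rw [gn_adj]; exact ⟨hxu, Or.inr (Or.inr ⟨l, hl, wxu⟩)⟩
      have adj_xv : (Gn n).Adj x.1 v.1 := by
        rw [gn_adj]
        refine ⟨hxv, Or.inl (Or.inl ⟨l + k, by omega, walkLen_append wxu wuv⟩)⟩
      refine h3 {x, u, v} ?_
      rw [SimpleGraph.is3Clique_triple_iff]
      exact ⟨hind.mpr adj_xu, hind.mpr adj_xv, hind.mpr hadj_uv⟩
  have C : ((Gn n).induce S).Coloring (Prop × Prop) := by
    refine SimpleGraph.Coloring.mk (fun v => (A v, B v)) ?_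
    intro u v hadj
    have h' := gn_adj.mp (hind.mp hadj)
    rcases h'.2 with (⟨k, hk, hw⟩ | ⟨k, hk, hw⟩) | (⟨k, hk, hw⟩ | ⟨k, hk, hw⟩)
    · exact key u v k (by omega) hw
    · exact (key v u k (by omega) hw).symm
    · exact (key v u k (by omega) hw).symm
    · exact key u v k (by omega) hw
  have := C.colorable
  simpa using this


lemma gn_colorable_bound {n m : ℕ} (h : (Gn n).Colorable m) : n + 1 ≤ m := by
  classical
  obtain ⟨C⟩ := h
  have proper : ∀ u v, DEdge n u v → C u ≠ C v := by
    intro u v h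
    have hne : u ≠ v := by
      intro he; subst he
      have := walk_self (walkLen_single h)
      omega
    have hadj : (Gn n).Adj u v := by
      rw [gn_adj]
      exact ⟨hne, Or.inl (Or.inl ⟨1, by norm_num, walkLen_single h⟩)⟩
    exact C.valid hadj
  have := colorBound n (fun v => C v) proper Finset.univ (fun v => Finset.mem_univ _)
  simpa using this

lemma gn_chrom (n : ℕ) : (n : ℕ∞) ≤ (Gn n).chromaticNumber := by
  rcases eq_or_ne (Gn n).chromaticNumber ⊤ with h | h
  · rw [h]; exact le_top
  · obtain ⟨m, hm⟩ := (SimpleGraph.chromaticNumber_ne_top_iff_exists).mp h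
    have hcol := SimpleGraph.colorable_chromaticNumber hm
    have hle : n ≤ (Gn n).chromaticNumber.toNat := by
      have := gn_colorable_bound hcol; omega
    have : ((n : ℕ) : ℕ∞) ≤ (((Gn n).chromaticNumber.toNat : ℕ) : ℕ∞) := by
      exact_mod_cast hle
    rwa [ENat.coe_toNat h] at this

end CliqueSec
end Struct

/-- main theorem. -/
theorem main_graph (n : ℕ) :
    ∃ (V : Type) (G : SimpleGraph V),
      ((n : ℕ∞) ≤ G.chromaticNumber) ∧
      (∀ s : Finset V, ¬ G.IsNClique 4 s) ∧
      (∀ S : Set V, (∀ s : Finset S, ¬ (G.induce S).IsNClique 3 s) →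
        (G.induce S).Colorable 4) := by
  refine ⟨Vtx n, Gn n, gn_chrom n, no4clique, fun S h3 => triangleFree_colorable S h3⟩
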